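/- Let r : ℤ → ℝ be strictly increasing, Z the swapping ring of (ℤ, r), Q its fraction field, and {·,·} a swapping bracket on Q; write [P,Q'] := {P,Q'}/(P·Q'). Then for every k ∈ ℤ: [ (x_{k−1,k+1}/x_{k−1,k})·(x_{k+2,k}/x_{k+2,k+1}) , (x_{k+1,k+3}/x_{k+1,k+2})·(x_{k+4,k+2}/x_{k+4,k+3}) ] = −(x_{k+2,k+3}·x_{k+1,k})/(x_{k+2,k}·x_{k+1,k+3}), where x_{a,b} denotes the generator of Z indexed by the pair (a,b). -/
import Mathlib


noncomputable section

/-- The linking number `J(r,x,s,y)` of two pairs of points on the (cut) circle. -/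
def linkJ (r x s y : ℝ) : ℝ :=
  (1 / 2) * (Real.sign (r - x) * Real.sign (r - y) * Real.sign (y - x)
    - Real.sign (r - x) * Real.sign (r - s) * Real.sign (s - x))

/-- The swapping ring `Z` of `(ℤ, r)`: the quotient of `ℝ[x_{ab} : (a,b) ∈ ℤ × ℤ]`
by the ideal generated by the variables `x_{aa}`, presented canonically as the
polynomial ring on the off-diagonal generators `x_{ab}`, `a ≠ b`. -/
abbrev SwapRingZ : Type := MvPolynomial {p : ℤ × ℤ // p.1 ≠ p.2} ℝ

/-- `Q`, the fraction field of the swapping ring. -/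
abbrev SwapFieldZ : Type := FractionRing SwapRingZ

/-- The generator `x_{a,b}` viewed inside the fraction field `Q`
(it is `0` when `a = b`, reflecting the relation `x_{aa} = 0`). -/
def xg (a b : ℤ) : SwapFieldZ :=
  if h : a = b then 0
  else algebraMap SwapRingZ SwapFieldZ (MvPolynomial.X ⟨(a, b), h⟩)

lemma xg_ne_zero {a b : ℤ} (h : a ≠ b) : xg a b ≠ 0 := by
  rw [xg, dif_neg h]
  exact fun hc => MvPolynomial.X_ne_zero _
    ((map_eq_zero_iff _ (IsFractionRing.injective SwapRingZ SwapFieldZ)).mp hc)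

lemma xg_diag (a : ℤ) : xg a a = 0 := dif_pos rfl

section FieldAux

variable {F : Type*} [Field F]

lemma br_one_aux (br : F → F → F)
    (h_leib : ∀ x y z : F, br (x * y) z = x * br y z + y * br x z)
    (y : F) : br 1 y = 0 := by
  have h := h_leib 1 1 y
  simp only [mul_one, one_mul] at h
  linear_combination -h

lemma br_inv_aux (br : F → F → F)
    (h_leib : ∀ x y z : F, br (x * y) z = x * br y z + y * br x z)
    (x y : F) (hx : x ≠ 0) :
    br x⁻¹ y = -(x⁻¹ * x⁻¹) * br x y := by
  have h := h_leib x x⁻¹ y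
  rw [mul_inv_cancel₀ hx, br_one_aux br h_leib] at h
  have hc : x⁻¹ * x = 1 := inv_mul_cancel₀ hx
  linear_combination (-(x⁻¹)) * h - (br x⁻¹ y) * hc

lemma Rsplit (br : F → F → F)
    (h_leib : ∀ x y z : F, br (x * y) z = x * br y z + y * br x z)
    (x x' y : F) (hx : x ≠ 0) (hx' : x' ≠ 0) (hy : y ≠ 0) :
    br (x * x') y / (x * x' * y) = br x y / (x * y) + br x' y / (x' * y) := by
  rw [h_leib, div_add_div _ _ (mul_ne_zero hx hy) (mul_ne_zero hx' hy),
    div_eq_div_iff (mul_ne_zero (mul_ne_zero hx hx') hy)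
      (mul_ne_zero (mul_ne_zero hx hy) (mul_ne_zero hx' hy))]
  ring

lemma Rinvterm (br : F → F → F)
    (h_leib : ∀ x y z : F, br (x * y) z = x * br y z + y * br x z)
    (x y : F) (hx : x ≠ 0) (hy : y ≠ 0) :
    br x⁻¹ y / (x⁻¹ * y) = -(br x y / (x * y)) := by
  have hc : x⁻¹ * x = 1 := inv_mul_cancel₀ hx
  rw [br_inv_aux br h_leib x y hx, div_eq_iff (mul_ne_zero (inv_ne_zero hx) hy)]
  simp only [neg_mul, neg_inj]
  rw [div_mul_eq_mul_div, eq_div_iff (mul_ne_zero hx hy)]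
  linear_combination (x⁻¹ * br x y * y) * hc

lemma Rcross (br : F → F → F)
    (h_leib : ∀ x y z : F, br (x * y) z = x * br y z + y * br x z)
    (x x' u u' y : F) (hx : x ≠ 0) (hx' : x' ≠ 0) (hu : u ≠ 0) (hu' : u' ≠ 0)
    (hy : y ≠ 0) :
    br (x / x' * (u / u')) y / (x / x' * (u / u') * y) =
      br x y / (x * y) - br x' y / (x' * y) + br u y / (u * y) - br u' y / (u' * y) := by
  rw [div_eq_mul_inv x x', div_eq_mul_inv u u',
    Rsplit br h_leib (x * x'⁻¹) (u * u'⁻¹) y (mul_ne_zero hx (inv_ne_zero hx'))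
      (mul_ne_zero hu (inv_ne_zero hu')) hy,
    Rsplit br h_leib x x'⁻¹ y hx (inv_ne_zero hx') hy,
    Rsplit br h_leib u u'⁻¹ y hu (inv_ne_zero hu') hy,
    Rinvterm br h_leib x' y hx' hy, Rinvterm br h_leib u' y hu' hy]
  ring

lemma Rcross_right (br : F → F → F)
    (h_anti : ∀ x y : F, br x y = - br y x)
    (h_leib : ∀ x y z : F, br (x * y) z = x * br y z + y * br x z)
    (x x' u u' y : F) (hx : x ≠ 0) (hx' : x' ≠ 0) (hu : u ≠ 0) (hu' : u' ≠ 0)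
    (hy : y ≠ 0) :
    br y (x / x' * (u / u')) / (y * (x / x' * (u / u'))) =
      br y x / (y * x) - br y x' / (y * x') + br y u / (y * u) - br y u' / (y * u') := by
  rw [h_anti y (x / x' * (u / u')), mul_comm y (x / x' * (u / u')), neg_div,
    Rcross br h_leib x x' u u' y hx hx' hu hu' hy,
    h_anti x y, h_anti x' y, h_anti u y, h_anti u' y]
  ring

end FieldAux

lemma linkJ_cases (u x s y e1 e2 e3 e4 e5 : ℝ)
    (h1 : Real.sign (u - x) = e1) (h2 : Real.sign (u - y) = e2)
    (h3 : Real.sign (y - x) = e3) (h4 : Real.sign (u - s) = e4)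
    (h5 : Real.sign (s - x) = e5) :
    linkJ u x s y = 1 / 2 * (e1 * e2 * e3 - e1 * e4 * e5) := by
  unfold linkJ
  rw [h1, h2, h3, h4, h5]

/-- For a swapping bracket `{·,·}` on the fraction field `Q` of the swapping
ring of `(ℤ, r)` with `r` strictly increasing, writing `[P,Q'] = {P,Q'}/(P·Q')`,
one has, for all `k`:
`[(x_{k−1,k+1}/x_{k−1,k})·(x_{k+2,k}/x_{k+2,k+1}), (x_{k+1,k+3}/x_{k+1,k+2})·(x_{k+4,k+2}/x_{k+4,k+3})]`
`= −x_{k+2,k+3}·x_{k+1,k}/(x_{k+2,k}·x_{k+1,k+3})`. -/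
theorem swapping_bracket_next_adjacent_cross_ratios (r : ℤ → ℝ) (hr : StrictMono r)
    (br : SwapFieldZ → SwapFieldZ → SwapFieldZ)
    -- `{·,·}` is ℝ-bilinear, antisymmetric, and a derivation in each argument
    (h_add : ∀ x y z : SwapFieldZ, br (x + y) z = br x z + br y z)
    (h_smul : ∀ (c : ℝ) (x y : SwapFieldZ), br (c • x) y = c • br x y)
    (h_anti : ∀ x y : SwapFieldZ, br x y = - br y x)
    (h_leib : ∀ x y z : SwapFieldZ, br (x * y) z = x * br y z + y * br x z)
    -- values on the generators
    (h_gen : ∀ a b c d : ℤ,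
      br (xg a b) (xg c d) =
        linkJ (r a) (r b) (r c) (r d) • (xg a d * xg c b)) :
    ∀ k : ℤ,
      br (xg (k - 1) (k + 1) / xg (k - 1) k * (xg (k + 2) k / xg (k + 2) (k + 1)))
         (xg (k + 1) (k + 3) / xg (k + 1) (k + 2) * (xg (k + 4) (k + 2) / xg (k + 4) (k + 3))) /
        ((xg (k - 1) (k + 1) / xg (k - 1) k * (xg (k + 2) k / xg (k + 2) (k + 1))) *
         (xg (k + 1) (k + 3) / xg (k + 1) (k + 2) * (xg (k + 4) (k + 2) / xg (k + 4) (k + 3)))) =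
      - (xg (k + 2) (k + 3) * xg (k + 1) k / (xg (k + 2) k * xg (k + 1) (k + 3))) := by
  intro k
  have spos : ∀ {a b : ℤ}, b < a → Real.sign (r a - r b) = 1 :=
    fun h => Real.sign_of_pos (sub_pos.2 (hr h))
  have sneg : ∀ {a b : ℤ}, a < b → Real.sign (r a - r b) = -1 :=
    fun h => Real.sign_of_neg (sub_neg.2 (hr h))
  -- linking numbers that are needed
  have J13 : linkJ (r (k-1)) (r (k+1)) (r (k+4)) (r (k+2)) = 0 := by
    rw [linkJ_cases _ _ _ _ _ _ _ _ _ (sneg (by omega)) (sneg (by omega)) (spos (by omega))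
      (sneg (by omega)) (spos (by omega))]; norm_num
  have J14 : linkJ (r (k-1)) (r (k+1)) (r (k+4)) (r (k+3)) = 0 := by
    rw [linkJ_cases _ _ _ _ _ _ _ _ _ (sneg (by omega)) (sneg (by omega)) (spos (by omega))
      (sneg (by omega)) (spos (by omega))]; norm_num
  have J21 : linkJ (r (k-1)) (r k) (r (k+1)) (r (k+3)) = 0 := by
    rw [linkJ_cases _ _ _ _ _ _ _ _ _ (sneg (by omega)) (sneg (by omega)) (spos (by omega))
      (sneg (by omega)) (spos (by omega))]; norm_num
  have J22 : linkJ (r (k-1)) (r k) (r (k+1)) (r (k+2)) = 0 := by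
    rw [linkJ_cases _ _ _ _ _ _ _ _ _ (sneg (by omega)) (sneg (by omega)) (spos (by omega))
      (sneg (by omega)) (spos (by omega))]; norm_num
  have J23 : linkJ (r (k-1)) (r k) (r (k+4)) (r (k+2)) = 0 := by
    rw [linkJ_cases _ _ _ _ _ _ _ _ _ (sneg (by omega)) (sneg (by omega)) (spos (by omega))
      (sneg (by omega)) (spos (by omega))]; norm_num
  have J24 : linkJ (r (k-1)) (r k) (r (k+4)) (r (k+3)) = 0 := by
    rw [linkJ_cases _ _ _ _ _ _ _ _ _ (sneg (by omega)) (sneg (by omega)) (spos (by omega))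
      (sneg (by omega)) (spos (by omega))]; norm_num
  have J31 : linkJ (r (k+2)) (r k) (r (k+1)) (r (k+3)) = -1 := by
    rw [linkJ_cases _ _ _ _ _ _ _ _ _ (spos (by omega)) (sneg (by omega)) (spos (by omega))
      (spos (by omega)) (spos (by omega))]; norm_num
  have J34 : linkJ (r (k+2)) (r k) (r (k+4)) (r (k+3)) = 0 := by
    rw [linkJ_cases _ _ _ _ _ _ _ _ _ (spos (by omega)) (sneg (by omega)) (spos (by omega))
      (sneg (by omega)) (spos (by omega))]; norm_num
  have J44 : linkJ (r (k+2)) (r (k+1)) (r (k+4)) (r (k+3)) = 0 := by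
    rw [linkJ_cases _ _ _ _ _ _ _ _ _ (spos (by omega)) (sneg (by omega)) (spos (by omega))
      (sneg (by omega)) (spos (by omega))]; norm_num
  -- values of the bracket on the sixteen pairs of generators
  have b11 : br (xg (k-1) (k+1)) (xg (k+1) (k+3)) = 0 := by
    rw [h_gen, xg_diag, mul_zero, smul_zero]
  have b12 : br (xg (k-1) (k+1)) (xg (k+1) (k+2)) = 0 := by
    rw [h_gen, xg_diag, mul_zero, smul_zero]
  have b13 : br (xg (k-1) (k+1)) (xg (k+4) (k+2)) = 0 := by rw [h_gen, J13, zero_smul]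
  have b14 : br (xg (k-1) (k+1)) (xg (k+4) (k+3)) = 0 := by rw [h_gen, J14, zero_smul]
  have b21 : br (xg (k-1) k) (xg (k+1) (k+3)) = 0 := by rw [h_gen, J21, zero_smul]
  have b22 : br (xg (k-1) k) (xg (k+1) (k+2)) = 0 := by rw [h_gen, J22, zero_smul]
  have b23 : br (xg (k-1) k) (xg (k+4) (k+2)) = 0 := by rw [h_gen, J23, zero_smul]
  have b24 : br (xg (k-1) k) (xg (k+4) (k+3)) = 0 := by rw [h_gen, J24, zero_smul]
  have b31 : br (xg (k+2) k) (xg (k+1) (k+3)) = -(xg (k+2) (k+3) * xg (k+1) k) := by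
    rw [h_gen, J31, neg_one_smul]
  have b32 : br (xg (k+2) k) (xg (k+1) (k+2)) = 0 := by
    rw [h_gen, xg_diag, zero_mul, smul_zero]
  have b33 : br (xg (k+2) k) (xg (k+4) (k+2)) = 0 := by
    rw [h_gen, xg_diag, zero_mul, smul_zero]
  have b34 : br (xg (k+2) k) (xg (k+4) (k+3)) = 0 := by rw [h_gen, J34, zero_smul]
  have b41 : br (xg (k+2) (k+1)) (xg (k+1) (k+3)) = 0 := by
    rw [h_gen, xg_diag, mul_zero, smul_zero]
  have b42 : br (xg (k+2) (k+1)) (xg (k+1) (k+2)) = 0 := by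
    rw [h_gen, xg_diag, zero_mul, smul_zero]
  have b43 : br (xg (k+2) (k+1)) (xg (k+4) (k+2)) = 0 := by
    rw [h_gen, xg_diag, zero_mul, smul_zero]
  have b44 : br (xg (k+2) (k+1)) (xg (k+4) (k+3)) = 0 := by rw [h_gen, J44, zero_smul]
  -- decompose the bracket of the two cross-ratios
  have hQ : xg (k + 1) (k + 3) / xg (k + 1) (k + 2) *
      (xg (k + 4) (k + 2) / xg (k + 4) (k + 3)) ≠ 0 :=
    mul_ne_zero (div_ne_zero (xg_ne_zero (by omega)) (xg_ne_zero (by omega)))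
      (div_ne_zero (xg_ne_zero (by omega)) (xg_ne_zero (by omega)))
  rw [Rcross br h_leib _ _ _ _ _ (xg_ne_zero (by omega)) (xg_ne_zero (by omega))
    (xg_ne_zero (by omega)) (xg_ne_zero (by omega)) hQ,
    Rcross_right br h_anti h_leib _ _ _ _ (xg (k-1) (k+1)) (xg_ne_zero (by omega))
      (xg_ne_zero (by omega)) (xg_ne_zero (by omega)) (xg_ne_zero (by omega))
      (xg_ne_zero (by omega)),
    Rcross_right br h_anti h_leib _ _ _ _ (xg (k-1) k) (xg_ne_zero (by omega))
      (xg_ne_zero (by omega)) (xg_ne_zero (by omega)) (xg_ne_zero (by omega))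
      (xg_ne_zero (by omega)),
    Rcross_right br h_anti h_leib _ _ _ _ (xg (k+2) k) (xg_ne_zero (by omega))
      (xg_ne_zero (by omega)) (xg_ne_zero (by omega)) (xg_ne_zero (by omega))
      (xg_ne_zero (by omega)),
    Rcross_right br h_anti h_leib _ _ _ _ (xg (k+2) (k+1)) (xg_ne_zero (by omega))
      (xg_ne_zero (by omega)) (xg_ne_zero (by omega)) (xg_ne_zero (by omega))
      (xg_ne_zero (by omega)),
    b11, b12, b13, b14, b21, b22, b23, b24, b31, b32, b33, b34, b41, b42, b43, b44]
  simp only [zero_div, sub_zero, add_zero, zero_sub, zero_add, neg_zero, neg_div]
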